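/- arXiv:0706.3355 — 5 statements merged into one kernel-verified Lean document; each statement's English description precedes it below -/
import Mathlib

section
/- Let K be a field, r, s ∈ K* with r not a root of unity. Define τ = min{ i > 0 : sⁱ = rʲ for some j ∈ ℤ } and ε ∈ ℤ by r^ε = s^τ when this set is nonempty, and τ = ε = 0 otherwise. Then for δ, η ∈ ℤ one has r^δ · s^η = 1 if and only if (δ, η) = λ·(−ε, τ) for some λ ∈ ℤ. -/
/-!
The exponents `η` with `s ^ η ∈ ⟨r⟩` form a subgroup of `ℤ`, generated by `τ` (the least positive
such exponent, or `0` if there is none). So a relation `r ^ δ * s ^ η = 1` forces `η = l * τ`, and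
then `r ^ (δ + l * ε) = 1`; since `r` has infinite order, `δ = -l * ε`.
-/

section

variable {G : Type*} [Group G]

theorem Subgroup.int_dvd_of_zpow_mem_of_forall_le {H : Subgroup G} {s : G} {τ : ℕ} {η : ℤ}
    (hτ : 0 < τ) (hsτ : s ^ τ ∈ H) (hmin : ∀ i : ℕ, 0 < i → s ^ i ∈ H → τ ≤ i)
    (hη : s ^ η ∈ H) : (τ : ℤ) ∣ η := by
  have hτℤ : (0 : ℤ) < τ := by exact_mod_cast hτ
  have hrem_mem : s ^ (η % τ) ∈ H := by
    rw [Int.emod_def, zpow_sub, zpow_mul, zpow_natCast]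
    exact H.mul_mem hη (H.inv_mem (H.zpow_mem hsτ _))
  have hrem_nonneg : 0 ≤ η % τ := Int.emod_nonneg η hτℤ.ne'
  have hrem_lt : η % τ < τ := Int.emod_lt_of_pos η hτℤ
  refine Int.dvd_of_emod_eq_zero (by_contra fun hrem => ?_)
  have := hmin (η % τ).toNat (by omega) (by rwa [← zpow_natCast, Int.toNat_of_nonneg hrem_nonneg])
  omega

theorem Subgroup.eq_zero_of_zpow_mem {H : Subgroup G} {s : G} {η : ℤ}
    (hnone : ∀ i : ℕ, 0 < i → s ^ i ∉ H) (hη : s ^ η ∈ H) : η = 0 := by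
  by_contra hne
  refine hnone η.natAbs (Int.natAbs_pos.mpr hne) ?_
  rw [← zpow_natCast]
  rcases Int.natAbs_eq η with h | h
  · rwa [← h]
  · rw [← neg_neg (η.natAbs : ℤ), ← h, zpow_neg]
    exact H.inv_mem hη

theorem zpow_mul_eq_zpow_mul_of_zpow_eq {r s : G} {ε τ : ℤ} (hε : r ^ ε = s ^ τ) (l : ℤ) :
    s ^ (τ * l) = r ^ (ε * l) := by
  rw [zpow_mul, zpow_mul, hε]

theorem zpow_mul_zpow_eq_one_iff {r s : G} (hr : ∀ i : ℤ, r ^ i = 1 → i = 0) {ε τ : ℤ}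
    (hε : r ^ ε = s ^ τ) (hdvd : ∀ η : ℤ, s ^ η ∈ Subgroup.zpowers r → τ ∣ η) (δ η : ℤ) :
    r ^ δ * s ^ η = 1 ↔ ∃ l : ℤ, δ = l * (-ε) ∧ η = l * τ := by
  constructor
  · intro h
    have hη : s ^ η ∈ Subgroup.zpowers r :=
      Subgroup.mem_zpowers_iff.mpr ⟨-δ, by rw [zpow_neg, eq_inv_of_mul_eq_one_right h]⟩
    obtain ⟨l, rfl⟩ := hdvd η hη
    rw [zpow_mul_eq_zpow_mul_of_zpow_eq hε, ← zpow_add] at h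
    have := hr _ h
    exact ⟨l, by linarith, mul_comm _ _⟩
  · rintro ⟨l, rfl, rfl⟩
    rw [mul_comm l τ, zpow_mul_eq_zpow_mul_of_zpow_eq hε, ← zpow_add]
    ring_nf
    exact zpow_zero r

end

theorem stmt3 {K : Type*} [Field K] (r s : Kˣ)
    (hr : ∀ i : ℤ, r ^ i = 1 → i = 0)
    (τ : ℕ) (ε : ℤ)
    (hcase :
      ((∃ i : ℕ, 0 < i ∧ ∃ j : ℤ, (s : Kˣ) ^ i = r ^ j) ∧
        0 < τ ∧ (∀ i : ℕ, 0 < i → (∃ j : ℤ, s ^ i = r ^ j) → τ ≤ i) ∧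
        r ^ ε = s ^ τ) ∨
      ((¬ ∃ i : ℕ, 0 < i ∧ ∃ j : ℤ, s ^ i = r ^ j) ∧ τ = 0 ∧ ε = 0))
    (δ η : ℤ) :
    r ^ δ * s ^ η = 1 ↔ ∃ l : ℤ, δ = l * (-ε) ∧ η = l * τ := by
  have mem_zpowers {i : ℕ} : s ^ i ∈ Subgroup.zpowers r ↔ ∃ j : ℤ, s ^ i = r ^ j := by
    simp only [Subgroup.mem_zpowers_iff, eq_comm]
  refine zpow_mul_zpow_eq_one_iff hr (τ := τ) ?_ ?_ δ η
  · rcases hcase with ⟨-, -, -, hε⟩ | ⟨-, rfl, rfl⟩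
    · rwa [zpow_natCast]
    · simp
  · intro η hη
    rcases hcase with ⟨-, hτ, hmin, hε⟩ | ⟨hnone, -, -⟩
    · exact Subgroup.int_dvd_of_zpow_mem_of_forall_le hτ (mem_zpowers.mpr ⟨ε, hε.symm⟩)
        (fun i hi hi' => hmin i hi (mem_zpowers.mp hi')) hη
    · rw [Subgroup.eq_zero_of_zpow_mem (fun i hi hi' => hnone ⟨i, hi, mem_zpowers.mp hi'⟩) hη]
      exact dvd_zero _
end

section
/- Let K be a field of characteristic 0 and f ∈ K[X] nonzero. Define ρ = gcd{ deg(f) − i : i ∈ supp(f) } if this set is not {0}, and ρ = 0 otherwise. Then for λ ∈ K*, μ ∈ K: f(λX) = μ·f(X) if and only if λ^ρ = 1 and λ^{deg f} = μ. -/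
/-!
Comparing coefficients, `f(λX) = μ f` says exactly that `λ ^ i = μ` for every `i` in the support
of `f`. As `deg f` lies in the support, this means `μ = λ ^ deg f` and `λ ^ (deg f - i) = 1` for all
such `i`, i.e. the order of `λ` divides every `deg f - i`, hence divides their gcd `ρ`.
-/

open Polynomial

theorem pow_finset_gcd_eq_one_iff {M ι : Type*} [Monoid M] (x : M) (s : Finset ι) (g : ι → ℕ) :
    x ^ s.gcd g = 1 ↔ ∀ i ∈ s, x ^ g i = 1 := by
  simp only [← orderOf_dvd_iff_pow_eq_one, Finset.dvd_gcd_iff]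

theorem pow_eq_pow_iff_pow_sub_eq_one {M₀ : Type*} [MonoidWithZero M₀] [IsLeftCancelMulZero M₀]
    {x : M₀} (hx : x ≠ 0) {i d : ℕ} (hid : i ≤ d) : x ^ d = x ^ i ↔ x ^ (d - i) = 1 := by
  rw [← Nat.add_sub_cancel' hid, pow_add, Nat.add_sub_cancel_left, mul_eq_left₀ (pow_ne_zero i hx)]

namespace Polynomial

variable {R : Type*}

theorem coeff_comp_C_mul_X [CommSemiring R] (p : R[X]) (a : R) (n : ℕ) :
    (p.comp (C a * X)).coeff n = a ^ n * p.coeff n := by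
  rw [comp_eq_sum_left, coeff_sum, Polynomial.sum]
  simp only [mul_pow, ← C_pow, ← mul_assoc, ← C_mul, coeff_C_mul, coeff_X_pow]
  rw [Finset.sum_eq_single n]
  · simp [mul_comm]
  · intro b _ hb
    simp [hb.symm]
  · intro hn
    simp [notMem_support_iff.mp hn]

theorem comp_C_mul_X_eq_C_mul_iff [CommSemiring R] [IsDomain R] (p : R[X]) (a b : R) :
    p.comp (C a * X) = C b * p ↔ ∀ i ∈ p.support, a ^ i = b := by
  simp only [Polynomial.ext_iff, coeff_comp_C_mul_X, coeff_C_mul, mem_support_iff]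
  refine forall_congr' fun i => ?_
  by_cases hi : p.coeff i = 0
  · simp [hi]
  · simp only [ne_eq, hi, not_false_eq_true, forall_const, mul_left_inj' hi]

end Polynomial

theorem stmt4_general {K : Type*} [Field K] (f : K[X]) (hf : f ≠ 0)
    (ρ : ℕ) (hρ : ρ = f.support.gcd (fun i => f.natDegree - i))
    (l μ : K) (hl : l ≠ 0) :
    f.comp (C l * X) = C μ * f ↔ l ^ ρ = 1 ∧ l ^ f.natDegree = μ := by
  rw [comp_C_mul_X_eq_C_mul_iff, hρ, pow_finset_gcd_eq_one_iff]
  have hdeg := natDegree_mem_support_of_nonzero hf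
  constructor
  · intro h
    refine ⟨fun i hi => ?_, h _ hdeg⟩
    rw [← pow_eq_pow_iff_pow_sub_eq_one hl (le_natDegree_of_mem_supp i hi), h i hi, h _ hdeg]
  · rintro ⟨h, rfl⟩ i hi
    exact ((pow_eq_pow_iff_pow_sub_eq_one hl (le_natDegree_of_mem_supp i hi)).mpr (h i hi)).symm

theorem stmt4 {K : Type*} [Field K] [CharZero K] (f : K[X]) (hf : f ≠ 0)
    (ρ : ℕ) (hρ : ρ = f.support.gcd (fun i => f.natDegree - i))
    (l μ : K) (hl : l ≠ 0) :
    f.comp (C l * X) = C μ * f ↔ l ^ ρ = 1 ∧ l ^ f.natDegree = μ :=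
  stmt4_general f hf ρ hρ l μ hl
end

section
/- Let K be a field, D = K[h,k] the commutative polynomial ring in two variables, and σ the K-algebra automorphism of D with σ(h) = r·h, σ(k) = s·k, where r, s ∈ K*, r not a root of unity. Suppose q ∈ D is nonzero, not divisible by h or by k, and satisfies σ(q) = λ·q for some λ ∈ K*. If moreover the set { i > 0 : sⁱ = rʲ for some j } is empty (i.e. τ = 0 in the paper's notation), then q ∈ K*. -/
/-! The eigenvalue equation says that every monomial `hⁱkʲ` occurring in `q` has the same weight
`rⁱsʲ = λ`. Since `h ∤ q` and `k ∤ q`, some monomial of `q` is a pure power of `k` and some is a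
pure power of `h`, so `sᵇ = λ = rᵃ`; as no positive power of `s` is a power of `r`, `b = 0` and
`λ = 1`. Then every monomial of `q` has weight `rⁱsʲ = 1`, which forces `j = 0` for the same
reason and then `i = 0` because `r` is not a root of unity: `q` is a constant. -/

open MvPolynomial

namespace MvPolynomial

variable {σ R : Type*}

theorem coeff_bind₁_C_mul_X [CommSemiring R] (a : σ → R) (p : MvPolynomial σ R)
    (d : σ →₀ ℕ) :
    coeff d (bind₁ (fun i ↦ C (a i) * X i) p) = (d.prod fun i n ↦ a i ^ n) * coeff d p := by
  classical
  induction p using MvPolynomial.induction_on' with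
  | monomial e c =>
    have hprod : (e.prod fun i n ↦ (C (a i) * X i : MvPolynomial σ R) ^ n)
        = C (e.prod fun i n ↦ a i ^ n) * e.prod fun i n ↦ (X i : MvPolynomial σ R) ^ n := by
      simp only [Finsupp.prod, mul_pow, Finset.prod_mul_distrib, map_prod, map_pow]
    rw [bind₁_monomial, ← Finsupp.prod, hprod, ← mul_assoc, ← C_mul, ← monomial_eq,
      coeff_monomial, coeff_monomial]
    split_ifs with he
    · rw [he, mul_comm]
    · rw [mul_zero]
  | add p₁ p₂ h₁ h₂ => rw [map_add, coeff_add, coeff_add, h₁, h₂, mul_add]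

theorem prod_pow_eq_of_bind₁_C_mul_X_eq_C_mul [CommRing R] [IsDomain R] {a : σ → R}
    {p : MvPolynomial σ R} {l : R} (heig : bind₁ (fun i ↦ C (a i) * X i) p = C l * p)
    {d : σ →₀ ℕ} (hd : d ∈ p.support) : (d.prod fun i n ↦ a i ^ n) = l := by
  have hcoeff := congrArg (coeff d) heig
  rw [coeff_bind₁_C_mul_X, coeff_C_mul] at hcoeff
  exact mul_right_cancel₀ (mem_support_iff.mp hd) hcoeff

theorem exists_mem_support_apply_eq_zero_of_not_X_dvd [CommSemiring R] {p : MvPolynomial σ R}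
    {i : σ} (h : ¬ X i ∣ p) : ∃ d ∈ p.support, d i = 0 := by
  contrapose! h
  rw [p.as_sum]
  exact Finset.dvd_sum fun d hd ↦ X_dvd_monomial.mpr (Or.inr (h d hd))

theorem pow_mul_pow_eq_of_bind₁_eq_C_mul [CommRing R] [IsDomain R] {a b l : R}
    {p : MvPolynomial (Fin 2) R} (heig : bind₁ ![C a * X 0, C b * X 1] p = C l * p)
    {d : Fin 2 →₀ ℕ} (hd : d ∈ p.support) : a ^ d 0 * b ^ d 1 = l := by
  have hdiag : ![C a * X 0, C b * X 1] = fun i ↦ C (![a, b] i) * X i := by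
    ext1 i; fin_cases i <;> rfl
  have := prod_pow_eq_of_bind₁_C_mul_X_eq_C_mul (hdiag ▸ heig) hd
  rwa [Finsupp.prod_fintype _ _ fun _ ↦ pow_zero _, Fin.prod_univ_two] at this

end MvPolynomial

section

variable {G : Type*} [Group G] {r s : G}

theorem eq_zero_of_pow_eq_zpow (hτ : ¬ ∃ i : ℕ, 0 < i ∧ ∃ j : ℤ, s ^ i = r ^ j) {b : ℕ} {j : ℤ}
    (h : s ^ b = r ^ j) : b = 0 := by
  by_contra hb
  exact hτ ⟨b, Nat.pos_of_ne_zero hb, j, h⟩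

theorem eq_zero_of_pow_mul_pow_eq_one (hr : ∀ i : ℤ, r ^ i = 1 → i = 0)
    (hτ : ¬ ∃ i : ℕ, 0 < i ∧ ∃ j : ℤ, s ^ i = r ^ j) {a b : ℕ} (h : r ^ a * s ^ b = 1) :
    a = 0 ∧ b = 0 := by
  have hb : b = 0 := eq_zero_of_pow_eq_zpow hτ (j := -(a : ℤ)) <| by
    rw [zpow_neg, zpow_natCast]
    exact eq_inv_of_mul_eq_one_right h
  rw [hb, pow_zero, mul_one, ← zpow_natCast] at h
  exact ⟨by exact_mod_cast hr a h, hb⟩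

end

theorem stmt9_general {K : Type*} [Field K] (r s : Kˣ)
    (hr : ∀ i : ℤ, r ^ i = 1 → i = 0)
    (hτ : ¬ ∃ i : ℕ, 0 < i ∧ ∃ j : ℤ, (s : Kˣ) ^ i = r ^ j)
    (q : MvPolynomial (Fin 2) K) (hq : q ≠ 0)
    (hh : ¬ (X 0 ∣ q)) (hk : ¬ (X 1 ∣ q))
    (l : K)
    (heig : bind₁ ![C (r : K) * X 0, C (s : K) * X 1] q = C l * q) :
    ∃ c : K, c ≠ 0 ∧ q = C c := by
  have hweight : ∀ d ∈ q.support, ((r ^ d 0 * s ^ d 1 : Kˣ) : K) = l := fun d hd ↦ by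
    simpa using pow_mul_pow_eq_of_bind₁_eq_C_mul heig hd
  obtain ⟨dh, hdh, hdh0⟩ := exists_mem_support_apply_eq_zero_of_not_X_dvd hh
  obtain ⟨dk, hdk, hdk1⟩ := exists_mem_support_apply_eq_zero_of_not_X_dvd hk
  have hl : l = 1 := by
    have hsr : s ^ dh 1 = r ^ (dk 0 : ℤ) := by
      have := (hweight dh hdh).trans (hweight dk hdk).symm
      rw [hdh0, hdk1] at this
      simpa using Units.val_injective this
    rw [← hweight dh hdh, hdh0, eq_zero_of_pow_eq_zpow hτ hsr]
    simp
  have hsupport : ∀ d ∈ q.support, ∀ i, d i = 0 := fun d hd i ↦ by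
    have := eq_zero_of_pow_mul_pow_eq_one hr hτ (Units.val_eq_one.mp ((hweight d hd).trans hl))
    fin_cases i
    exacts [this.1, this.2]
  have hconst : q = C (coeff 0 q) :=
    totalDegree_eq_zero_iff_eq_C.mp ((totalDegree_eq_zero_iff _ q).mpr hsupport)
  exact ⟨coeff 0 q, fun h0 ↦ hq (by rw [hconst, h0, C_0]), hconst⟩

theorem stmt9 {K : Type*} [Field K] (r s : Kˣ)
    (hr : ∀ i : ℤ, r ^ i = 1 → i = 0)
    (hτ : ¬ ∃ i : ℕ, 0 < i ∧ ∃ j : ℤ, (s : Kˣ) ^ i = r ^ j)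
    (q : MvPolynomial (Fin 2) K) (hq : q ≠ 0)
    (hh : ¬ (X 0 ∣ q)) (hk : ¬ (X 1 ∣ q))
    (l : K) (hl : l ≠ 0)
    (heig : bind₁ ![C (r : K) * X 0, C (s : K) * X 1] q = C l * q) :
    ∃ c : K, c ≠ 0 ∧ q = C c :=
  stmt9_general r s hr hτ q hq hh hk l heig
end

section
/- Let K be a field of characteristic 0, s ∈ K*, γ ∈ K, and f ∈ K[X]. The generalized down-up algebra L(f, 1, s, γ) is conformal (i.e. there exists g ∈ K[X] with f(X) = s·g(X) − g(X − γ)) except exactly in the case s = 1, γ = 0 and f ≠ 0. -/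
/-!
Write `T g = s • g - g(X - γ)`, a `K`-linear endomorphism of `K[X]`. A linear map hitting every
degree is surjective, by eliminating leading terms. If `s ≠ 1`, `T (X ^ n)` has degree `n` with
leading coefficient `s - 1`; if `s = 1` and `γ ≠ 0`, `T (X ^ (n + 1))` has degree `n` with leading
coefficient `(n + 1) γ`, which is nonzero in characteristic zero. If `s = 1` and `γ = 0` then `T = 0`.
-/

open Polynomial

namespace Polynomial

theorem surjective_of_forall_exists_degree_eq {K : Type*} [Field K]
    (T : K[X] →ₗ[K] K[X]) (hT : ∀ n : ℕ, ∃ g, (T g).degree = n) : Function.Surjective T := by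
  suffices h : ∀ n : ℕ, ∀ f : K[X], f.degree < n → f ∈ LinearMap.range T from
    fun f => h (f.natDegree + 1) f
      (degree_le_natDegree.trans_lt (by exact_mod_cast Nat.lt_succ_self _))
  intro n
  induction n with
  | zero => intro f hf; simp [degree_eq_bot.mp (by simpa using hf)]
  | succ n ih =>
    intro f hf
    obtain ⟨g, hg⟩ := hT n
    have hgn : (T g).coeff n ≠ 0 := coeff_ne_zero_of_eq_degree hg
    set c := f.coeff n / (T g).coeff n
    have hlow : (f - c • T g).degree < n := by
      rw [degree_lt_iff_coeff_zero]
      intro m hm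
      rcases hm.eq_or_lt with rfl | hm
      · simp [c, hgn]
      · have hfm := (degree_lt_iff_coeff_zero _ _).mp hf m (by exact_mod_cast hm)
        simp [hfm, coeff_eq_zero_of_degree_lt (hg ▸ (by exact_mod_cast hm) : (T g).degree < m)]
    have hsplit : f = (f - c • T g) + T (c • g) := by simp
    rw [hsplit]
    exact add_mem (ih _ hlow) (LinearMap.mem_range_self T _)

theorem coeff_X_sub_C_pow {R : Type*} [CommRing R] (γ : R) (n k : ℕ) :
    ((X - C γ) ^ n).coeff k = (-γ) ^ (n - k) * (n.choose k : R) := by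
  rw [sub_eq_add_neg, ← C_neg, coeff_X_add_C_pow]

theorem degree_C_mul_X_pow_sub_X_sub_C_pow {R : Type*} [CommRing R] {s : R}
    (hs : s ≠ 1) (γ : R) (n : ℕ) : (C s * X ^ n - (X - C γ) ^ n).degree = (n : WithBot ℕ) := by
  apply degree_eq_of_le_of_coeff_ne_zero
  · compute_degree!
  · simpa [coeff_X_sub_C_pow, sub_eq_zero] using hs

theorem degree_X_pow_succ_sub_X_sub_C_pow_succ {R : Type*} [CommRing R] [IsDomain R]
    [CharZero R] {γ : R} (hγ : γ ≠ 0) (n : ℕ) :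
    (X ^ (n + 1) - (X - C γ) ^ (n + 1)).degree = (n : WithBot ℕ) := by
  apply degree_eq_of_le_of_coeff_ne_zero
  · have hdeg : (X ^ (n + 1) : R[X]).degree = ((X - C γ) ^ (n + 1)).degree := by
      simp [degree_pow]
    have hlc : (X ^ (n + 1) : R[X]).leadingCoeff = ((X - C γ) ^ (n + 1)).leadingCoeff := by
      simp [leadingCoeff_pow]
    have hlt := degree_sub_lt_left hdeg (pow_ne_zero _ X_ne_zero) hlc
    rw [degree_X_pow] at hlt
    exact Order.le_of_lt_succ (by exact_mod_cast hlt)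
  · simpa [coeff_X_sub_C_pow, Nat.cast_add_one_ne_zero] using hγ

theorem exists_eq_C_mul_sub_comp_X_sub_C {K : Type*} [Field K] [CharZero K] {s γ : K}
    (h : s ≠ 1 ∨ γ ≠ 0) (f : K[X]) : ∃ g : K[X], f = C s * g - g.comp (X - C γ) := by
  set T : K[X] →ₗ[K] K[X] := s • LinearMap.id - taylor (-γ)
  have hT : ∀ g, T g = C s * g - g.comp (X - C γ) := fun g => by
    simp [T, taylor_apply, smul_eq_C_mul, sub_eq_add_neg]
  have hdeg : ∀ n : ℕ, ∃ g, (T g).degree = n := by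
    intro n
    rcases eq_or_ne s 1 with rfl | hs
    · have hγ : γ ≠ 0 := h.resolve_left (not_not_intro rfl)
      refine ⟨X ^ (n + 1), ?_⟩
      rw [hT, X_pow_comp, C_1, one_mul, degree_X_pow_succ_sub_X_sub_C_pow_succ hγ]
    · exact ⟨X ^ n, by rw [hT, X_pow_comp, degree_C_mul_X_pow_sub_X_sub_C_pow hs]⟩
  obtain ⟨g, hg⟩ := surjective_of_forall_exists_degree_eq T hdeg f
  exact ⟨g, by rw [← hg, hT]⟩

end Polynomial

theorem stmt15_general {K : Type*} [Field K] [CharZero K] (s γ : K) (f : K[X]) :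
    (∃ g : K[X], f = C s * g - g.comp (X - C γ)) ↔ ¬(s = 1 ∧ γ = 0 ∧ f ≠ 0) := by
  constructor
  · rintro ⟨g, rfl⟩ ⟨rfl, rfl, hf⟩
    simp at hf
  · intro h
    by_cases hdegenerate : s = 1 ∧ γ = 0
    · obtain ⟨rfl, rfl⟩ := hdegenerate
      exact ⟨0, by simpa using h⟩
    · exact exists_eq_C_mul_sub_comp_X_sub_C (not_and_or.mp hdegenerate) f

theorem stmt15 {K : Type*} [Field K] [CharZero K] (s γ : K) (hs : s ≠ 0) (f : K[X]) :
    (∃ g : K[X], f = C s * g - g.comp (X - C γ)) ↔ ¬(s = 1 ∧ γ = 0 ∧ f ≠ 0) :=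
  stmt15_general s γ f
end

section
/- Let K be a field of characteristic 0, r, s, μ, μ', ν ∈ K*, η, β ∈ K, with s^τ = r for a fixed τ ≥ 1 and β(μμ' − 1) = 0. In the K-algebra L generated by x, y, h, k with relations x·h = r·h·x, h·y = r·y·h, x·k = s·k·x, k·y = s·y·k, y·x = k + β/(s−1), x·y = s·k + β/(s−1) (assuming s ≠ 1), hk = kh, the assignment x ↦ μx, y ↦ μ'y, h ↦ νh + ηk^τ, k ↦ μμ'k extends to a K-algebra automorphism. -/
/-! A `K`-algebra map out of `L` is the same as four elements satisfying the seven defining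
relations. The proposed images `μx, μ'y, νh + ηk^τ, μμ'k` satisfy them: `k^τ` skew-commutes with
`x` and `y` by the factor `s^τ = r`, exactly as `h` does, and the constant `β/(s-1)` in the
relations for `yx` and `xy` is unaffected by rescaling `k` by `μμ'` because `β(μμ' - 1) = 0`.
The map with parameters `μ⁻¹, μ'⁻¹, ν⁻¹, -η/(ν(μμ')^τ)` is of the same kind and inverts it on
the generators. -/

noncomputable section

open FreeAlgebra

/-- Defining relations of the algebra `L` with generators `x = ι 0`, `y = ι 1`, `h = ι 2`,
`k = ι 3`: `x h = r·h x`, `h y = r·y h`, `x k = s·k x`, `k y = s·y k`,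
`y x = k + β/(s−1)`, `x y = s·k + β/(s−1)`, `h k = k h`. -/
def L18Rel (K : Type*) [Field K] (r s β : K) :
    FreeAlgebra K (Fin 4) → FreeAlgebra K (Fin 4) → Prop :=
  fun a b =>
    (a = ι K 0 * ι K 2 ∧ b = r • (ι K 2 * ι K 0)) ∨
    (a = ι K 2 * ι K 1 ∧ b = r • (ι K 1 * ι K 2)) ∨
    (a = ι K 0 * ι K 3 ∧ b = s • (ι K 3 * ι K 0)) ∨
    (a = ι K 3 * ι K 1 ∧ b = s • (ι K 1 * ι K 3)) ∨
    (a = ι K 1 * ι K 0 ∧ b = ι K 3 + (β / (s - 1)) • 1) ∨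
    (a = ι K 0 * ι K 1 ∧ b = s • ι K 3 + (β / (s - 1)) • 1) ∨
    (a = ι K 2 * ι K 3 ∧ b = ι K 3 * ι K 2)

/-- The algebra `L` of Statement 18. -/
abbrev L18 (K : Type*) [Field K] (r s β : K) := RingQuot (L18Rel K r s β)

/-- The generator `x`. -/
def L18x (K : Type*) [Field K] (r s β : K) : L18 K r s β :=
  RingQuot.mkAlgHom K (L18Rel K r s β) (ι K 0)

/-- The generator `y`. -/
def L18y (K : Type*) [Field K] (r s β : K) : L18 K r s β :=
  RingQuot.mkAlgHom K (L18Rel K r s β) (ι K 1)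

/-- The generator `h`. -/
def L18h (K : Type*) [Field K] (r s β : K) : L18 K r s β :=
  RingQuot.mkAlgHom K (L18Rel K r s β) (ι K 2)

/-- The generator `k`. -/
def L18k (K : Type*) [Field K] (r s β : K) : L18 K r s β :=
  RingQuot.mkAlgHom K (L18Rel K r s β) (ι K 3)

theorem mul_pow_eq_smul_of_mul_eq_smul {R A : Type*} [CommSemiring R] [Semiring A] [Algebra R A]
    {a b : A} {c : R} (h : a * b = c • (b * a)) (n : ℕ) : a * b ^ n = c ^ n • (b ^ n * a) := by
  have hconj : SemiconjBy a b (c • b) := by rwa [SemiconjBy, smul_mul_assoc]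
  rw [(hconj.pow_right n).eq, smul_pow, smul_mul_assoc]

theorem pow_mul_eq_smul_of_mul_eq_smul {R A : Type*} [CommSemiring R] [Semiring A] [Algebra R A]
    {a b : A} {c : R} (h : b * a = c • (a * b)) (n : ℕ) : b ^ n * a = c ^ n • (a * b ^ n) := by
  induction n with
  | zero => simp
  | succ n ih =>
    rw [pow_succ, mul_assoc, h, mul_smul_comm, ← mul_assoc, ih, smul_mul_assoc, smul_smul,
      ← pow_succ', mul_assoc, pow_succ]

namespace L18

variable {K : Type*} [Field K] {r s β : K}

structure Relations {A : Type*} [Semiring A] [Algebra K A] (r s β : K) (x y h k : A) : Prop where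
  x_mul_h : x * h = r • (h * x)
  h_mul_y : h * y = r • (y * h)
  x_mul_k : x * k = s • (k * x)
  k_mul_y : k * y = s • (y * k)
  y_mul_x : y * x = k + (β / (s - 1)) • 1
  x_mul_y : x * y = s • k + (β / (s - 1)) • 1
  h_mul_k : h * k = k * h

theorem relations_generators :
    Relations r s β (L18x K r s β) (L18y K r s β) (L18h K r s β) (L18k K r s β) := by
  constructor <;>
    simp only [L18x, L18y, L18h, L18k, ← map_mul, ← map_smul, ← map_add,
      ← map_one (RingQuot.mkAlgHom K (L18Rel K r s β))] <;>
    exact RingQuot.mkAlgHom_rel K (by simp [L18Rel])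

variable {A : Type*} [Semiring A] [Algebra K A] {x y h k : A}

def lift (hrel : Relations r s β x y h k) : L18 K r s β →ₐ[K] A :=
  RingQuot.liftAlgHom K ⟨FreeAlgebra.lift K ![x, y, h, k], by
    rintro a b (⟨rfl, rfl⟩ | ⟨rfl, rfl⟩ | ⟨rfl, rfl⟩ | ⟨rfl, rfl⟩ | ⟨rfl, rfl⟩ | ⟨rfl, rfl⟩ |
      ⟨rfl, rfl⟩)
    exacts [by simpa using hrel.x_mul_h, by simpa using hrel.h_mul_y, by simpa using hrel.x_mul_k,
      by simpa using hrel.k_mul_y, by simpa using hrel.y_mul_x, by simpa using hrel.x_mul_y,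
      by simpa using hrel.h_mul_k]⟩

@[simp] theorem lift_x (hrel : Relations r s β x y h k) : lift hrel (L18x K r s β) = x := by
  simp [lift, L18x]

@[simp] theorem lift_y (hrel : Relations r s β x y h k) : lift hrel (L18y K r s β) = y := by
  simp [lift, L18y]

@[simp] theorem lift_h (hrel : Relations r s β x y h k) : lift hrel (L18h K r s β) = h := by
  simp [lift, L18h]

@[simp] theorem lift_k (hrel : Relations r s β x y h k) : lift hrel (L18k K r s β) = k := by
  simp [lift, L18k]

theorem algHom_ext {f g : L18 K r s β →ₐ[K] A}
    (hx : f (L18x K r s β) = g (L18x K r s β)) (hy : f (L18y K r s β) = g (L18y K r s β))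
    (hh : f (L18h K r s β) = g (L18h K r s β)) (hk : f (L18k K r s β) = g (L18k K r s β)) :
    f = g := by
  apply RingQuot.ringQuot_ext'
  ext i
  fin_cases i
  exacts [hx, hy, hh, hk]

theorem Relations.rescale (hrel : Relations r s β x y h k) (μ μ' ν η : K) {τ : ℕ}
    (hsr : s ^ τ = r) (hβ : β * (μ * μ' - 1) = 0) :
    Relations r s β (μ • x) (μ' • y) (ν • h + η • k ^ τ) ((μ * μ') • k) where
  x_mul_h := by
    simp only [mul_add, add_mul, smul_mul_assoc, mul_smul_comm, smul_add, smul_smul]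
    rw [hrel.x_mul_h, mul_pow_eq_smul_of_mul_eq_smul hrel.x_mul_k, hsr]
    module
  h_mul_y := by
    simp only [mul_add, add_mul, smul_mul_assoc, mul_smul_comm, smul_add, smul_smul]
    rw [hrel.h_mul_y, pow_mul_eq_smul_of_mul_eq_smul hrel.k_mul_y, hsr]
    module
  x_mul_k := by
    simp only [smul_mul_assoc, mul_smul_comm, smul_smul, hrel.x_mul_k]
    module
  k_mul_y := by
    simp only [smul_mul_assoc, mul_smul_comm, smul_smul, hrel.k_mul_y]
    module
  y_mul_x := by
    simp only [smul_mul_assoc, mul_smul_comm, smul_smul, hrel.y_mul_x]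
    match_scalars
    · ring
    · linear_combination hβ / (s - 1)
  x_mul_y := by
    simp only [smul_mul_assoc, mul_smul_comm, smul_smul, hrel.x_mul_y]
    match_scalars
    · ring
    · linear_combination hβ / (s - 1)
  h_mul_k := by
    simp only [mul_add, add_mul, smul_mul_assoc, mul_smul_comm, smul_add, smul_smul]
    rw [hrel.h_mul_k, ← pow_succ, ← pow_succ']
    module

-- The paper's `ψ⁺`.
def psi (μ μ' ν η : K) {τ : ℕ} (hsr : s ^ τ = r) (hβ : β * (μ * μ' - 1) = 0) :
    L18 K r s β →ₐ[K] L18 K r s β :=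
  lift (relations_generators.rescale μ μ' ν η hsr hβ)

theorem psi_comp_psi_eq_id {μ₁ μ₁' ν₁ η₁ μ₂ μ₂' ν₂ η₂ : K} {τ : ℕ} (hsr : s ^ τ = r)
    (hβ₁ : β * (μ₁ * μ₁' - 1) = 0) (hβ₂ : β * (μ₂ * μ₂' - 1) = 0) (hμ : μ₁ * μ₂ = 1)
    (hμ' : μ₁' * μ₂' = 1) (hν : ν₁ * ν₂ = 1) (hη : ν₂ * η₁ + η₂ * (μ₁ * μ₁') ^ τ = 0) :
    (psi μ₁ μ₁' ν₁ η₁ hsr hβ₁).comp (psi μ₂ μ₂' ν₂ η₂ hsr hβ₂) = AlgHom.id K (L18 K r s β) := by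
  apply algHom_ext <;>
    simp only [psi, AlgHom.comp_apply, AlgHom.id_apply, map_add, map_smul, map_pow, lift_x,
      lift_y, lift_h, lift_k, smul_pow] <;>
    match_scalars
  · linear_combination hμ
  · linear_combination hμ'
  · linear_combination hν
  · linear_combination hη
  · linear_combination μ₁' * μ₂' * hμ + hμ'

end L18

theorem stmt18_general {K : Type*} [Field K]
    (r s μ μ' ν η β : K) (τ : ℕ)
    (hμ : μ ≠ 0) (hμ' : μ' ≠ 0) (hν : ν ≠ 0)
    (hsr : s ^ τ = r) (hβ : β * (μ * μ' - 1) = 0) :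
    ∃ φ : L18 K r s β ≃ₐ[K] L18 K r s β,
      φ (L18x K r s β) = μ • L18x K r s β ∧
      φ (L18y K r s β) = μ' • L18y K r s β ∧
      φ (L18h K r s β) = ν • L18h K r s β + η • (L18k K r s β) ^ τ ∧
      φ (L18k K r s β) = (μ * μ') • L18k K r s β := by
  have hβ' : β * (μ⁻¹ * μ'⁻¹ - 1) = 0 := by
    field_simp
    linear_combination -hβ
  refine ⟨AlgEquiv.ofAlgHom (L18.psi μ μ' ν η hsr hβ)
    (L18.psi μ⁻¹ μ'⁻¹ ν⁻¹ (-(η / (ν * (μ * μ') ^ τ))) hsr hβ')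
    (L18.psi_comp_psi_eq_id hsr hβ hβ' (by field_simp) (by field_simp) (by field_simp) ?_)
    (L18.psi_comp_psi_eq_id hsr hβ' hβ (by field_simp) (by field_simp) (by field_simp) ?_),
    ?_, ?_, ?_, ?_⟩
  · field_simp
    ring
  · rw [← mul_inv, inv_pow]
    field_simp
    ring
  all_goals simp [L18.psi]

theorem stmt18 {K : Type*} [Field K] [CharZero K]
    (r s μ μ' ν η β : K) (τ : ℕ) (hτ : 1 ≤ τ)
    (hr : r ≠ 0) (hs : s ≠ 0) (hs1 : s ≠ 1)
    (hμ : μ ≠ 0) (hμ' : μ' ≠ 0) (hν : ν ≠ 0)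
    (hsr : s ^ τ = r) (hβ : β * (μ * μ' - 1) = 0) :
    ∃ φ : L18 K r s β ≃ₐ[K] L18 K r s β,
      φ (L18x K r s β) = μ • L18x K r s β ∧
      φ (L18y K r s β) = μ' • L18y K r s β ∧
      φ (L18h K r s β) = ν • L18h K r s β + η • (L18k K r s β) ^ τ ∧
      φ (L18k K r s β) = (μ * μ') • L18k K r s β :=
  stmt18_general r s μ μ' ν η β τ hμ hμ' hν hsr hβ
end
end
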